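/- Let v be a real-analytic function on a neighborhood of a point c ∈ ℝ², and choose coordinates (x, y) centered at c. Assume that near c, v(x, y) = v₀₀ + v₀₂·y² + p(x, y), where p is analytic with vanishing order at least three at the origin (Lp(0,0) = 0 for every differential operator L of order ≤ 2). If v₀₂ ≠ 0 and q = (x_q, y_q) satisfies x_q ≠ 0 (i.e., q does not lie on the y-axis), then the gradient of R_q v does not vanish at c; in particular, the nodal set {R_q v = 0} is near c a single smooth curve through c, so c is a degree-two vertex of the nodal set of R_q v. -/

import Mathlib

noncomputable section

open Real Set Filter

/-- The partial derivative of `u` in the direction `v`. -/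
def pd (u : ℝ × ℝ → ℝ) (v : ℝ × ℝ) : ℝ × ℝ → ℝ := fun p => fderiv ℝ u p v

/-- The Laplacian of `u`. -/
def lap (u : ℝ × ℝ → ℝ) : ℝ × ℝ → ℝ :=
  fun p => pd (pd u (1, 0)) (1, 0) p + pd (pd u (0, 1)) (0, 1) p

/-- The rotational derivative `R_q u (x,y) = (x - q₁) ∂_y u - (y - q₂) ∂_x u`. -/
def rotDeriv (q : ℝ × ℝ) (u : ℝ × ℝ → ℝ) : ℝ × ℝ → ℝ :=
  fun p => (p.1 - q.1) * pd u (0, 1) p - (p.2 - q.2) * pd u (1, 0) p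

/-!
Write `v = Q + P` near the origin with `Q = v₀₀ + v₀₂ y²`. Since `R_q` is a first-order
operator with affine coefficients, `R_q P` still vanishes to order two at the origin, so
`∇(R_q v)(0) = ∇(R_q Q)(0)`. Explicitly `R_q Q = 2 v₀₂ (x - x_q) y`, whose `y`-derivative at
the origin is `-2 v₀₂ x_q ≠ 0`.
-/

open Topology

section Calculus

variable {E F : Type*} [NormedAddCommGroup E] [NormedSpace ℝ E]
  [NormedAddCommGroup F] [NormedSpace ℝ F]

theorem fderiv_eq_zero_of_iteratedFDeriv_one_eq_zero {f : E → F} {x : E}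
    (h : iteratedFDeriv ℝ 1 f x = 0) : fderiv ℝ f x = 0 :=
  norm_eq_zero.1 <| by rw [← norm_iteratedFDeriv_one, h, norm_zero]

theorem fderiv_fderiv_eq_zero_of_iteratedFDeriv_two_eq_zero {f : E → F} {x : E}
    (h : iteratedFDeriv ℝ 2 f x = 0) : fderiv ℝ (fderiv ℝ f) x = 0 :=
  norm_eq_zero.1 <| by
    rw [← norm_iteratedFDeriv_one (fderiv ℝ f) (𝕜 := ℝ), norm_iteratedFDeriv_fderiv, h, norm_zero]

end Calculus

section RotDeriv

variable {q x : ℝ × ℝ} {u w : ℝ × ℝ → ℝ}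

theorem hasFDerivAt_pd {u'' : (ℝ × ℝ) →L[ℝ] (ℝ × ℝ) →L[ℝ] ℝ} (h : HasFDerivAt (fderiv ℝ u) u'' x)
    (e : ℝ × ℝ) : HasFDerivAt (pd u e) ((ContinuousLinearMap.apply ℝ ℝ e).comp u'') x :=
  (ContinuousLinearMap.apply ℝ ℝ e).hasFDerivAt.comp x h

theorem rotDeriv_eventuallyEq (h : u =ᶠ[𝓝 x] w) : rotDeriv q u =ᶠ[𝓝 x] rotDeriv q w := by
  filter_upwards [h.fderiv (𝕜 := ℝ)] with p hp
  simp only [rotDeriv, pd, hp]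

theorem rotDeriv_add_apply (hu : DifferentiableAt ℝ u x) (hw : DifferentiableAt ℝ w x) :
    rotDeriv q (u + w) x = rotDeriv q u x + rotDeriv q w x := by
  simp only [rotDeriv, pd, fderiv_add hu hw, add_apply]
  ring

theorem hasFDerivAt_rotDeriv_zero_of_fderiv_eq_zero (h₁ : fderiv ℝ u x = 0)
    (hd : DifferentiableAt ℝ (fderiv ℝ u) x) (h₂ : fderiv ℝ (fderiv ℝ u) x = 0) :
    HasFDerivAt (rotDeriv q u) (0 : (ℝ × ℝ) →L[ℝ] ℝ) x := by
  have hpd : ∀ e, HasFDerivAt (pd u e) (0 : (ℝ × ℝ) →L[ℝ] ℝ) x := fun e => by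
    simpa [h₂] using hasFDerivAt_pd hd.hasFDerivAt e
  have hval : ∀ e, pd u e x = 0 := fun e => by simp [pd, h₁]
  have h := ((hasFDerivAt_fst.sub_const q.1).mul (hpd (0, 1))).sub
    ((hasFDerivAt_snd.sub_const q.2).mul (hpd (1, 0)))
  simp only [hval, smul_zero, zero_smul, add_zero, sub_zero] at h
  exact h

theorem rotDeriv_const_add_mul_snd_sq (a b : ℝ) :
    rotDeriv q (fun p => a + b * p.2 ^ 2) = fun p => 2 * b * (p.1 - q.1) * p.2 := by
  funext p
  have hQ : HasFDerivAt (fun p : ℝ × ℝ => a + b * p.2 ^ 2)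
      ((2 * b * p.2) • ContinuousLinearMap.snd ℝ ℝ ℝ) p := by
    refine ((((hasFDerivAt_snd (𝕜 := ℝ) (p := p)).pow 2).const_mul b).const_add a).congr_fderiv ?_
    ext <;> simp
    ring
  simp only [rotDeriv, pd, hQ.fderiv, smul_apply, ContinuousLinearMap.coe_snd', smul_eq_mul,
    mul_one, mul_zero, sub_zero]
  ring

theorem hasFDerivAt_rotDeriv_const_add_mul_snd_sq (a b : ℝ) :
    HasFDerivAt (rotDeriv q (fun p => a + b * p.2 ^ 2))
      ((-2 * b * q.1) • ContinuousLinearMap.snd ℝ ℝ ℝ) 0 := by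
  rw [rotDeriv_const_add_mul_snd_sq]
  refine (((hasFDerivAt_fst.sub_const q.1).const_mul (2 * b)).mul
    (hasFDerivAt_snd (𝕜 := ℝ) (E := ℝ) (F := ℝ) (p := 0))).congr_fderiv ?_
  ext <;> simp

end RotDeriv

theorem rotational_derivative_nonvanishing_gradient_general
    (v : ℝ × ℝ → ℝ) (U : Set (ℝ × ℝ)) (hU : U ∈ nhds ((0, 0) : ℝ × ℝ))
    (v00 v02 : ℝ) (P : ℝ × ℝ → ℝ) (hP : AnalyticOnNhd ℝ P U)
    (hPord : ∀ n : ℕ, n ≤ 2 → iteratedFDeriv ℝ n P ((0, 0) : ℝ × ℝ) = 0)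
    (hform : ∀ p ∈ U, v p = v00 + v02 * p.2 ^ 2 + P p)
    (hv02 : v02 ≠ 0)
    (q : ℝ × ℝ) (hq : q.1 ≠ 0) :
    fderiv ℝ (rotDeriv q v) ((0, 0) : ℝ × ℝ) ≠ 0 := by
  set Q : ℝ × ℝ → ℝ := fun p => v00 + v02 * p.2 ^ 2
  have hsplit : rotDeriv q v =ᶠ[𝓝 0] rotDeriv q Q + rotDeriv q P := by
    have hvQP : v =ᶠ[𝓝 0] Q + P := eventually_of_mem hU hform
    filter_upwards [rotDeriv_eventuallyEq (q := q) hvQP, eventually_eventually_nhds.2 hU]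
      with p hp hpU
    rw [hp, rotDeriv_add_apply (by fun_prop) (hP p (mem_of_mem_nhds hpU)).differentiableAt]
    rfl
  have hRP : HasFDerivAt (rotDeriv q P) (0 : (ℝ × ℝ) →L[ℝ] ℝ) 0 :=
    hasFDerivAt_rotDeriv_zero_of_fderiv_eq_zero
      (fderiv_eq_zero_of_iteratedFDeriv_one_eq_zero (hPord 1 one_le_two))
      (hP 0 (mem_of_mem_nhds hU)).fderiv.differentiableAt
      (fderiv_fderiv_eq_zero_of_iteratedFDeriv_two_eq_zero (hPord 2 le_rfl))
  have hR := ((hasFDerivAt_rotDeriv_const_add_mul_snd_sq v00 v02).add hRP).congr_of_eventuallyEq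
    hsplit
  rw [Prod.mk_zero_zero, hR.fderiv, add_zero]
  refine smul_ne_zero (by simp [hv02, hq]) fun h => ?_
  simpa using DFunLike.congr_fun h (0, 1)

/-- If, in coordinates centered at `c = (0,0)`,
`v(x,y) = v₀₀ + v₀₂ y² + P(x,y)` with `P` of vanishing order at least three, `v₀₂ ≠ 0`,
and `q = (q₁, q₂)` has `q₁ ≠ 0` (i.e. `q` is not on the normal, the `y`-axis), then the
gradient of `R_q v` does not vanish at the origin (so the origin is a degree-two vertex of
the nodal set of `R_q v`). -/
theorem rotational_derivative_nonvanishing_gradient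
    (v : ℝ × ℝ → ℝ) (U : Set (ℝ × ℝ)) (hU : U ∈ nhds ((0, 0) : ℝ × ℝ))
    (hv : AnalyticOnNhd ℝ v U)
    (v00 v02 : ℝ) (P : ℝ × ℝ → ℝ) (hP : AnalyticOnNhd ℝ P U)
    (hPord : ∀ n : ℕ, n ≤ 2 → iteratedFDeriv ℝ n P ((0, 0) : ℝ × ℝ) = 0)
    (hform : ∀ p ∈ U, v p = v00 + v02 * p.2 ^ 2 + P p)
    (hv02 : v02 ≠ 0)
    (q : ℝ × ℝ) (hq : q.1 ≠ 0) :
    fderiv ℝ (rotDeriv q v) ((0, 0) : ℝ × ℝ) ≠ 0 :=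
  rotational_derivative_nonvanishing_gradient_general v U hU v00 v02 P hP hPord hform hv02 q hq
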